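/- arXiv:2103.13688 — 3 statements merged into one kernel-verified Lean document; each statement's English description precedes it below -/
import Mathlib

section
/- With notation as above (transitivity of Brauer maps): for a p-permutation G-algebra A and p-subgroups Q ⊴ S ≤ G, the Brauer homomorphism Br_S : A^S → A(S) factors as Br_S = Br_S^{A(Q)} ∘ Br_Q, where Br_Q : A^S → A(Q)^S and Br_S^{A(Q)} : A(Q)^S → A(Q)(S) ≅ A(S). -/
/-!
A `p`-permutation basis makes the Brauer quotients explicit. For a `p`-subgroup `P` and
`a ∈ A^P`, `a` lies in `Σ_{R<P} A_R^P` exactly when its coordinates on the `P`-fixed basis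
elements vanish: a trace from `R < P` has coordinate `[P : R] • _ = 0` there, and conversely the
coordinates of `a` are constant on `P`-orbits, so `a` is peeled off orbit by orbit as traces from
stabilisers. Hence `Br_P a` only sees the coordinates on `P`-fixed basis elements. The `S`-fixed
ones are among the `Q`-fixed ones, so `Br_S` factors through `Br_Q`; and since `S` normalises `Q`
it permutes the `Q`-fixed basis elements, so truncating a lift to its `Q`-fixed coordinates lifts
every element of `A(Q)^S` to `A^S`.
-/

namespace PPerm
open scoped Classical


def IsPrimIdemSet {B : Type*} [Ring B] (S : Set B) (e : B) : Prop :=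
  e ∈ S ∧ IsIdempotentElem e ∧ e ≠ 0 ∧
    ∀ a b : B, a ∈ S → b ∈ S → IsIdempotentElem a → IsIdempotentElem b →
      a * b = 0 → b * a = 0 → e = a + b → a = 0 ∨ b = 0

def IsBlock {B : Type*} [Ring B] (e : B) : Prop := IsPrimIdemSet (Set.center B) e

variable {G : Type*} [Group G]

/-- A transversal (set of left coset representatives) of `H` in `K`. -/
def IsTransversal (H K : Subgroup G) (S : Finset G) : Prop :=
  (↑S : Set G) ⊆ ↑K ∧ ∀ y ∈ K, ∃! x, x ∈ S ∧ x⁻¹ * y ∈ H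

/-- A transversal of the double cosets `NxR` in `G`. -/
def IsDCTransversal (N R : Subgroup G) (D : Finset G) : Prop :=
  ∀ g : G, ∃! x, x ∈ D ∧ ∃ n ∈ N, ∃ r ∈ R, g = n * x * r

/-- The conjugate subgroup `R^g = g⁻¹ R g`. -/
def conjSub (g : G) (R : Subgroup G) : Subgroup G :=
  R.map (MulAut.conj g⁻¹).toMonoidHom

variable (A : Type*) [Ring A] [MulSemiringAction G A]

/-- The fixed-point subring `A^Q`. -/
def fixedSubring (Q : Subgroup G) : Subring A where
  carrier := {a | ∀ q ∈ Q, q • a = a}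
  mul_mem' := by intro a b ha hb; intro q hq; rw [smul_mul', ha q hq, hb q hq]
  one_mem' := by intro q hq; exact smul_one q
  add_mem' := by intro a b ha hb; intro q hq; rw [smul_add, ha q hq, hb q hq]
  zero_mem' := by intro q hq; exact smul_zero q
  neg_mem' := by intro a ha; intro q hq; rw [smul_neg, ha q hq]

/-- The relative trace ideal `V_H^K = Tr_H^K(V ∩ A^H)`, described via transversals. -/
def trSetIn (V : Set A) (H K : Subgroup G) : Set A :=
  {b | ∃ (a : A) (S : Finset G), a ∈ V ∧ (∀ h ∈ H, h • a = a) ∧ IsTransversal H K S ∧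
    b = ∑ x ∈ S, x • a}

/-- The relative trace ideal `A_H^K = Tr_H^K(A^H)`. -/
def trSet (H K : Subgroup G) : Set A := trSetIn A Set.univ H K

/-- `Q` is a defect group of `c` relative to `K`, with traces taken inside `V`. -/
def IsDefectIn (V : Set A) (c : A) (Q K : Subgroup G) : Prop :=
  Q ≤ K ∧ c ∈ trSetIn A V Q K ∧
    ∀ Q' : Subgroup G, Q' ≤ Q → c ∈ trSetIn A V Q' K → Q' = Q

/-- `Q` is a defect group of `c` in `K`. -/
def IsDefect (c : A) (Q K : Subgroup G) : Prop := IsDefectIn A Set.univ c Q K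

/-- The congruence defining the Brauer quotient `A(Q) = A^Q / Σ_{R<Q} A_R^Q`. -/
def brCon (Q : Subgroup G) : RingCon (fixedSubring A Q) :=
  ringConGen (fun a b => ∃ R : Subgroup G, R < Q ∧ ((a : A) - b) ∈ trSet A R Q)

/-- The Brauer quotient `A(Q)`. -/
abbrev BrQuot (Q : Subgroup G) := (brCon A Q).Quotient

/-- The Brauer homomorphism `Br_Q : A^Q → A(Q)` (with junk value `0` off `A^Q`). -/
noncomputable def brA (Q : Subgroup G) (a : A) : BrQuot A Q :=
  if h : a ∈ fixedSubring A Q then (brCon A Q).mk' ⟨a, h⟩ else 0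

/-- `x ∈ A(Q)` is fixed by the (conjugation) action of `n`. -/
def fixesQuot (Q : Subgroup G) (n : G) (x : BrQuot A Q) : Prop :=
  ∀ a : A, a ∈ fixedSubring A Q → brA A Q a = x → brA A Q (n • a) = x

/-- The `T`-fixed points `A(Q)^T` of the Brauer quotient. -/
def quotFixed (Q T : Subgroup G) : Set (BrQuot A Q) := {x | ∀ n ∈ T, fixesQuot A Q n x}

/-- `(Q, e)` is an `(A, c, G)`-Brauer pair. -/
def IsBPair (c : A) (Q : Subgroup G) (e : BrQuot A Q) : Prop :=
  IsBlock e ∧ brA A Q c * e ≠ 0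

/-- The Broué–Puig containment order on Brauer pairs. -/
def pairLE (S T : Subgroup G) (fS : BrQuot A S) (fT : BrQuot A T) : Prop :=
  S ≤ T ∧ ∀ i : A, IsPrimIdemSet (fixedSubring A T : Set A) i →
    brA A T i * fT ≠ 0 → brA A S i * fS ≠ 0

/-- `(S, fS)` is an `(A(Q), fQ, H)`-Brauer pair, expressed via lifts along `Br_Q`,
using the canonical identification `A(Q)(S) ≅ A(S)`. -/
def IsBPair₂ (Q : Subgroup G) (fQ : BrQuot A Q) (S : Subgroup G) (fS : BrQuot A S) : Prop :=
  IsBlock fS ∧ ∃ a : A, a ∈ fixedSubring A S ∧ brA A Q a = fQ ∧ brA A S a * fS ≠ 0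

/-- The Broué–Puig order on Brauer pairs of the algebra `A(Q)`, expressed via lifts. -/
def pairLE₂ (Q S T : Subgroup G) (fS : BrQuot A S) (fT : BrQuot A T) : Prop :=
  S ≤ T ∧ ∀ j : BrQuot A Q, IsPrimIdemSet (quotFixed A Q T) j →
    (∃ a : A, a ∈ fixedSubring A T ∧ brA A Q a = j ∧ brA A T a * fT ≠ 0) →
    (∃ a : A, a ∈ fixedSubring A S ∧ brA A Q a = j ∧ brA A S a * fS ≠ 0)

/-- conjugation of `a` by a unit of the subset `V`. -/
def IsConjBy (V : Set A) (a b : A) : Prop :=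
  ∃ u v : A, u ∈ V ∧ v ∈ V ∧ u * v = 1 ∧ v * u = 1 ∧ b = u * a * v

/-- `A` is a `p`-permutation `G`-algebra: it has a `G`-stable `k`-basis. -/
def IsPPermAlgebra (k : Type*) [CommSemiring k] [Module k A] : Prop :=
  ∃ s : Set A, (∀ g : G, ∀ x ∈ s, g • x ∈ s) ∧
    LinearIndependent k ((↑) : s → A) ∧ Submodule.span k s = ⊤

section Transversal

variable {H K : Subgroup G} {T : Finset G}

theorem IsTransversal.mem (hT : IsTransversal H K T) {x : G} (hx : x ∈ T) : x ∈ K := hT.1 hx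

theorem IsTransversal.eq_of_inv_mul_mem (hT : IsTransversal H K T) {x x' y : G} (hy : y ∈ K)
    (hx : x ∈ T) (hx' : x' ∈ T) (h : x⁻¹ * y ∈ H) (h' : x'⁻¹ * y ∈ H) : x = x' :=
  (hT.2 y hy).unique ⟨hx, h⟩ ⟨hx', h'⟩

def IsTransversal.toQuotient (hT : IsTransversal H K T) (x : T) : K ⧸ H.subgroupOf K :=
  QuotientGroup.mk ⟨x, hT.mem x.2⟩

theorem IsTransversal.bijective_toQuotient (hT : IsTransversal H K T) :
    Function.Bijective hT.toQuotient := by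
  refine ⟨fun x x' hxx' => Subtype.ext ?_, fun c => ?_⟩
  · rw [IsTransversal.toQuotient, IsTransversal.toQuotient, QuotientGroup.eq,
      Subgroup.mem_subgroupOf] at hxx'
    exact hT.eq_of_inv_mul_mem (hT.mem x'.2) x.2 x'.2 (by simpa using hxx') (by simp)
  · induction c using QuotientGroup.induction_on with
    | H y =>
      obtain ⟨x, ⟨hx, hxy⟩, -⟩ := hT.2 y y.2
      refine ⟨⟨x, hx⟩, ?_⟩
      rw [IsTransversal.toQuotient, QuotientGroup.eq, Subgroup.mem_subgroupOf]
      simpa using hxy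

theorem IsTransversal.card_eq_index (hT : IsTransversal H K T) :
    T.card = (H.subgroupOf K).index := by
  rw [← Nat.card_eq_finsetCard, Subgroup.index,
    Nat.card_eq_of_bijective _ hT.bijective_toQuotient]

theorem IsTransversal.natCast_card_eq_zero [Finite G] {p : ℕ} [Fact p.Prime] {k : Type*}
    [AddMonoidWithOne k] [CharP k p] (hT : IsTransversal H K T) (hK : IsPGroup p K)
    (hHK : H < K) : (T.card : k) = 0 := by
  obtain ⟨n, hn⟩ := hK.index (H.subgroupOf K)
  have hn0 : n ≠ 0 := by
    rintro rfl
    rw [pow_zero, Subgroup.index_eq_one, Subgroup.subgroupOf_eq_top] at hn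
    exact hHK.not_ge hn
  rw [hT.card_eq_index, hn, CharP.cast_eq_zero_iff k p]
  exact dvd_pow_self p hn0

variable {A} {a : A}

theorem out_smul_eq_smul (ha : ∀ h ∈ H, h • a = a) (y : K) :
    (((QuotientGroup.mk y : K ⧸ H.subgroupOf K).out : K) : G) • a = (y : G) • a := by
  obtain ⟨h, hh⟩ := QuotientGroup.mk_out_eq_mul (H.subgroupOf K) y
  rw [hh, Subgroup.coe_mul, mul_smul, ha _ (Subgroup.mem_subgroupOf.mp h.2)]

variable [Fintype G]

theorem exists_isTransversal (H K : Subgroup G) : ∃ T, IsTransversal H K T := by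
  refine ⟨Finset.univ.image fun c : K ⧸ H.subgroupOf K => ((c.out : K) : G), ?_,
    fun y hy => ?_⟩
  · simp [Set.subset_def]
  · refine ⟨((QuotientGroup.mk ⟨y, hy⟩ : K ⧸ H.subgroupOf K).out : G), ⟨by simp, ?_⟩,
      ?_⟩
    · obtain ⟨h, hh⟩ := QuotientGroup.mk_out_eq_mul (H.subgroupOf K) ⟨y, hy⟩
      simpa [hh, Subgroup.mem_subgroupOf] using H.inv_mem h.2
    · rintro _ ⟨hx, hxy⟩
      obtain ⟨c, -, rfl⟩ := Finset.mem_image.mp hx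
      congr
      rw [← c.out_eq', QuotientGroup.eq, Subgroup.mem_subgroupOf]
      simpa using hxy

theorem IsTransversal.sum_smul_eq (hT : IsTransversal H K T) (ha : ∀ h ∈ H, h • a = a) :
    ∑ x ∈ T, x • a = ∑ c : K ⧸ H.subgroupOf K, ((c.out : K) : G) • a := by
  rw [← Finset.sum_coe_sort, ← hT.bijective_toQuotient.sum_comp]
  exact Finset.sum_congr rfl fun x _ => (out_smul_eq_smul ha ⟨x, hT.mem x.2⟩).symm

/-- Left multiplication by `q` permutes the cosets. -/
theorem IsTransversal.smul_sum_smul (hT : IsTransversal H K T) (ha : ∀ h ∈ H, h • a = a)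
    {q : G} (hq : q ∈ K) : q • ∑ x ∈ T, x • a = ∑ x ∈ T, x • a := by
  rw [hT.sum_smul_eq ha, Finset.smul_sum]
  refine Fintype.sum_bijective _ (MulAction.bijective (⟨q, hq⟩ : K)) _ _ fun c => ?_
  induction c using QuotientGroup.induction_on with
  | H y =>
    rw [MulAction.Quotient.smul_mk, out_smul_eq_smul ha, out_smul_eq_smul ha]
    simp [mul_smul]

end Transversal

/-- The ideal `Σ_{R<P} A_R^P` of `A^P`, as an additive subgroup of `A`. -/
def brKer (P : Subgroup G) : AddSubgroup A :=
  AddSubgroup.closure {t | ∃ R < P, t ∈ trSet A R P}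

section BrauerQuotient

variable {A} {P R : Subgroup G}

theorem mul_mem_trSet (hRP : R ≤ P) {c t : A} (hc : c ∈ fixedSubring A P)
    (ht : t ∈ trSet A R P) : c * t ∈ trSet A R P ∧ t * c ∈ trSet A R P := by
  obtain ⟨a, T, -, ha, hT, rfl⟩ := ht
  refine ⟨⟨c * a, T, trivial, fun h hh => ?_, hT, ?_⟩,
    ⟨a * c, T, trivial, fun h hh => ?_, hT, ?_⟩⟩
  · rw [smul_mul', hc h (hRP hh), ha h hh]
  · rw [Finset.mul_sum]
    exact Finset.sum_congr rfl fun x hx => by rw [smul_mul', hc x (hT.mem hx)]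
  · rw [smul_mul', hc h (hRP hh), ha h hh]
  · rw [Finset.sum_mul]
    exact Finset.sum_congr rfl fun x hx => by rw [smul_mul', hc x (hT.mem hx)]

theorem mul_mem_brKer {c t : A} (hc : c ∈ fixedSubring A P) (ht : t ∈ brKer A P) :
    c * t ∈ brKer A P ∧ t * c ∈ brKer A P := by
  refine ⟨(AddSubgroup.closure_le (K := (brKer A P).comap (AddMonoidHom.mulLeft c))).mpr ?_ ht,
    (AddSubgroup.closure_le (K := (brKer A P).comap (AddMonoidHom.mulRight c))).mpr ?_ ht⟩ <;>
  rintro t ⟨R, hR, ht⟩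
  · exact AddSubgroup.subset_closure ⟨R, hR, (mul_mem_trSet hR.le hc ht).1⟩
  · exact AddSubgroup.subset_closure ⟨R, hR, (mul_mem_trSet hR.le hc ht).2⟩

variable [Fintype G]

theorem mem_fixedSubring_of_mem_trSet {t : A} (ht : t ∈ trSet A R P) :
    t ∈ fixedSubring A P := by
  obtain ⟨a, T, -, ha, hT, rfl⟩ := ht
  exact fun q hq => hT.smul_sum_smul ha hq

theorem brKer_le_fixedSubring : brKer A P ≤ (fixedSubring A P).toAddSubgroup :=
  (AddSubgroup.closure_le _).mpr fun _ ⟨_, _, ht⟩ => mem_fixedSubring_of_mem_trSet ht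

/-- `brCon A P` is, by definition, the congruence of this two-sided ideal of `A^P`. -/
theorem mem_span_iff_mem_brKer (x : fixedSubring A P) :
    x ∈ TwoSidedIdeal.span {y : fixedSubring A P | ∃ R < P, (y : A) ∈ trSet A R P} ↔
      (x : A) ∈ brKer A P := by
  refine ⟨fun hx => ?_, fun hx => ?_⟩
  · induction hx using TwoSidedIdeal.span_induction with
    | mem y hy => exact AddSubgroup.subset_closure hy
    | zero => exact zero_mem _
    | add y z _ _ hy hz => exact add_mem hy hz
    | neg y _ hy => exact neg_mem hy
    | left_absorb c y _ hy => exact (mul_mem_brKer c.2 hy).1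
    | right_absorb c y _ hy => exact (mul_mem_brKer c.2 hy).2
  · obtain ⟨x, hxP⟩ := x
    change x ∈ brKer A P at hx
    revert hxP
    induction hx using AddSubgroup.closure_induction with
    | mem t ht => exact fun _ => TwoSidedIdeal.subset_span ht
    | zero => exact fun _ => zero_mem _
    | add u v hu hv ihu ihv =>
      exact fun _ => add_mem (ihu (brKer_le_fixedSubring hu)) (ihv (brKer_le_fixedSubring hv))
    | neg u hu ihu => exact fun _ => neg_mem (ihu (brKer_le_fixedSubring hu))

end BrauerQuotient

section BrauerMap

variable {A} {P : Subgroup G} {a c : A}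

theorem brA_of_mem (ha : a ∈ fixedSubring A P) : brA A P a = (brCon A P).mk' ⟨a, ha⟩ :=
  dif_pos ha

theorem brA_add (ha : a ∈ fixedSubring A P) (hc : c ∈ fixedSubring A P) :
    brA A P (a + c) = brA A P a + brA A P c := by
  rw [brA_of_mem ha, brA_of_mem hc, brA_of_mem (add_mem ha hc), ← map_add]
  rfl

theorem brA_mul (ha : a ∈ fixedSubring A P) (hc : c ∈ fixedSubring A P) :
    brA A P (a * c) = brA A P a * brA A P c := by
  rw [brA_of_mem ha, brA_of_mem hc, brA_of_mem (mul_mem ha hc), ← map_mul]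
  rfl

theorem brA_sub (ha : a ∈ fixedSubring A P) (hc : c ∈ fixedSubring A P) :
    brA A P (a - c) = brA A P a - brA A P c := by
  rw [brA_of_mem ha, brA_of_mem hc, brA_of_mem (sub_mem ha hc), ← map_sub]
  rfl

theorem brA_neg (ha : a ∈ fixedSubring A P) : brA A P (-a) = -brA A P a := by
  rw [brA_of_mem ha, brA_of_mem (neg_mem ha), ← map_neg]
  rfl

variable (A P) in
theorem brA_zero : brA A P 0 = 0 := by
  rw [brA_of_mem (zero_mem _), ← map_zero (brCon A P).mk']
  rfl

variable (A P) in
theorem brA_one : brA A P 1 = 1 := by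
  rw [brA_of_mem (one_mem _), ← map_one (brCon A P).mk']
  rfl

theorem exists_brA_eq (x : BrQuot A P) : ∃ a ∈ fixedSubring A P, brA A P a = x := by
  obtain ⟨a, rfl⟩ := (brCon A P).mk'_surjective x
  exact ⟨a, a.2, brA_of_mem a.2⟩

variable [Fintype G]

theorem brA_eq_zero_iff (ha : a ∈ fixedSubring A P) : brA A P a = 0 ↔ a ∈ brKer A P := by
  rw [brA_of_mem ha, ← map_zero (brCon A P).mk', RingCon.coe_mk', RingCon.eq]
  exact mem_span_iff_mem_brKer ⟨a, ha⟩

theorem brA_eq_brA_iff (ha : a ∈ fixedSubring A P) (hc : c ∈ fixedSubring A P) :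
    brA A P a = brA A P c ↔ a - c ∈ brKer A P := by
  rw [← sub_eq_zero, ← brA_sub ha hc, brA_eq_zero_iff (sub_mem ha hc)]

end BrauerMap

section PermutationBasis

open MulAction

variable {A} {k : Type*} [Ring k] [Module k A] {ι : Type*} [MulAction G ι]
  {b : Module.Basis ι k A} {P : Subgroup G}

theorem repr_sum_smul_basis (hb : ∀ (g : G) (i : ι), g • b i = b (g • i)) {i : ι}
    {T : Finset G} (hT : IsTransversal (P ⊓ stabilizer G i) P T) (j : ι) :
    b.repr (∑ x ∈ T, x • b i) j = if ∃ g ∈ P, g • i = j then 1 else 0 := by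
  simp only [hb, map_sum, b.repr_self, Finsupp.finsetSum_apply, Finsupp.single_apply]
  split_ifs with hj
  · obtain ⟨g, hg, rfl⟩ := hj
    obtain ⟨x, ⟨hx, hxg⟩, -⟩ := hT.2 g hg
    have hxi : x • i = g • i := by
      have := mem_stabilizer_iff.mp (Subgroup.mem_inf.mp hxg).2
      rwa [mul_smul, inv_smul_eq_iff, eq_comm] at this
    rw [Finset.sum_eq_single_of_mem x hx fun x' hx' hne => if_neg fun h => hne ?_, if_pos hxi]
    refine hT.eq_of_inv_mul_mem hg hx' hx (Subgroup.mem_inf.mpr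
      ⟨P.mul_mem (P.inv_mem (hT.mem hx')) hg, mem_stabilizer_iff.mpr ?_⟩) hxg
    rw [mul_smul, ← h, inv_smul_smul]
  · exact Finset.sum_eq_zero fun x hx => if_neg fun h => hj ⟨x, hT.mem hx, h⟩

variable [SMulCommClass G k A]

theorem repr_smul (hb : ∀ (g : G) (i : ι), g • b i = b (g • i)) (g : G) (a : A) (i : ι) :
    b.repr (g • a) i = b.repr a (g⁻¹ • i) := by
  let f₁ : A →ₗ[k] k :=
    Finsupp.lapply i ∘ₗ b.repr.toLinearMap ∘ₗ DistribSMul.toLinearMap k A g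
  let f₂ : A →ₗ[k] k := Finsupp.lapply (g⁻¹ • i) ∘ₗ b.repr.toLinearMap
  refine LinearMap.congr_fun (b.ext fun j => ?_ : f₁ = f₂) a
  simp [f₁, f₂, DistribSMul.toLinearMap_apply, hb, Finsupp.single_apply, eq_inv_smul_iff]

theorem repr_smul_of_mem (hb : ∀ (g : G) (i : ι), g • b i = b (g • i)) {a : A}
    (ha : a ∈ fixedSubring A P) {g : G} (hg : g ∈ P) (i : ι) :
    b.repr a (g • i) = b.repr a i := by
  rw [← ha g hg, repr_smul hb, inv_smul_smul, ha g hg]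

theorem repr_sub_sum_smul_basis (hb : ∀ (g : G) (i : ι), g • b i = b (g • i)) {a : A}
    (ha : a ∈ fixedSubring A P) {i : ι} {T : Finset G}
    (hT : IsTransversal (P ⊓ stabilizer G i) P T) (j : ι) :
    b.repr (a - ∑ x ∈ T, x • (b.repr a i • b i)) j =
      if ∃ g ∈ P, g • i = j then 0 else b.repr a j := by
  simp_rw [smul_comm _ (b.repr a i), ← Finset.smul_sum, map_sub, map_smul, Finsupp.sub_apply,
    Finsupp.smul_apply, repr_sum_smul_basis hb hT]
  split_ifs with hj
  · obtain ⟨g, hg, rfl⟩ := hj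
    rw [repr_smul_of_mem hb ha hg, smul_eq_mul, mul_one, sub_self]
  · simp

variable [Fintype G]

/-- Subtracting the trace of `b.repr a i • b i` from `P ⊓ stabilizer G i` kills the coordinates
of `a` on the `P`-orbit of `i`, so we can induct on the support of `a`. -/
theorem mem_brKer_of_repr_eq_zero (hb : ∀ (g : G) (i : ι), g • b i = b (g • i))
    {a : A} (ha : a ∈ fixedSubring A P)
    (h : ∀ i, P ≤ stabilizer G i → b.repr a i = 0) : a ∈ brKer A P := by
  induction hn : (b.repr a).support.card using Nat.strong_induction_on generalizing a with
  | _ n ih =>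
  obtain hs | ⟨i, hi⟩ := (b.repr a).support.eq_empty_or_nonempty
  · rw [Finsupp.support_eq_empty, LinearEquiv.map_eq_zero_iff] at hs
    rw [hs]
    exact zero_mem _
  have hiP : ¬ P ≤ stabilizer G i := fun hiP => Finsupp.mem_support_iff.mp hi (h i hiP)
  obtain ⟨T, hT⟩ := exists_isTransversal (P ⊓ stabilizer G i) P
  set t := ∑ x ∈ T, x • (b.repr a i • b i)
  have ht : t ∈ brKer A P := by
    refine AddSubgroup.subset_closure
      ⟨_, inf_lt_left.mpr hiP, _, T, trivial, fun g hg => ?_, hT, rfl⟩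
    rw [smul_comm, hb, mem_stabilizer_iff.mp hg.2]
  have hrepr := repr_sub_sum_smul_basis hb ha hT
  have hsupp : (b.repr (a - t)).support ⊂ (b.repr a).support := by
    refine (Finset.ssubset_iff_of_subset fun j hj => ?_).mpr ⟨i, hi, ?_⟩
    · rw [Finsupp.mem_support_iff, hrepr] at hj
      rw [Finsupp.mem_support_iff]
      split_ifs at hj
      exacts [absurd rfl hj, hj]
    · rw [Finsupp.notMem_support_iff, hrepr, if_pos ⟨1, P.one_mem, one_smul G i⟩]
  have hat : a - t ∈ brKer A P := by
    refine ih _ (hn ▸ Finset.card_lt_card hsupp) (sub_mem ha (brKer_le_fixedSubring ht))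
      (fun j hj => ?_) rfl
    rw [hrepr]
    split_ifs
    exacts [rfl, h j hj]
  simpa using add_mem hat ht

variable {p : ℕ} [Fact p.Prime] [CharP k p]

theorem repr_eq_zero_of_mem_trSet (hb : ∀ (g : G) (i : ι), g • b i = b (g • i))
    (hP : IsPGroup p P) {R : Subgroup G} (hRP : R < P) {t : A} (ht : t ∈ trSet A R P) {i : ι}
    (hi : P ≤ stabilizer G i) : b.repr t i = 0 := by
  obtain ⟨a, T, -, -, hT, rfl⟩ := ht
  have hterm : ∀ x ∈ T, b.repr (x • a) i = b.repr a i := fun x hx => by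
    rw [repr_smul hb, hi (P.inv_mem (hT.mem hx))]
  rw [map_sum, Finsupp.finsetSum_apply, Finset.sum_congr rfl hterm, Finset.sum_const,
    nsmul_eq_mul, hT.natCast_card_eq_zero hP hRP, zero_mul]

theorem repr_eq_zero_of_mem_brKer (hb : ∀ (g : G) (i : ι), g • b i = b (g • i))
    (hP : IsPGroup p P) {a : A} (ha : a ∈ brKer A P) {i : ι} (hi : P ≤ stabilizer G i) :
    b.repr a i = 0 := by
  induction ha using AddSubgroup.closure_induction with
  | mem t ht =>
    obtain ⟨R, hRP, ht⟩ := ht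
    exact repr_eq_zero_of_mem_trSet hb hP hRP ht hi
  | zero => simp
  | add x y _ _ hx hy => simp [hx, hy]
  | neg x _ hx => simp [hx]

theorem brA_eq_brA_iff_repr (hb : ∀ (g : G) (i : ι), g • b i = b (g • i)) (hP : IsPGroup p P)
    {a c : A} (ha : a ∈ fixedSubring A P) (hc : c ∈ fixedSubring A P) :
    brA A P a = brA A P c ↔ ∀ i, P ≤ stabilizer G i → b.repr a i = b.repr c i := by
  simp_rw [brA_eq_brA_iff ha hc, ← sub_eq_zero (a := b.repr a _), ← Finsupp.sub_apply,
    ← map_sub]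
  exact ⟨fun h i hi => repr_eq_zero_of_mem_brKer hb hP h hi,
    mem_brKer_of_repr_eq_zero hb (sub_mem ha hc)⟩

end PermutationBasis

theorem le_stabilizer_smul_of_mem_normalizer {X : Type*} [MulAction G X] {Q : Subgroup G} {n : G}
    (hn : n ∈ Subgroup.normalizer (Q : Set G)) {x : X} (hx : Q ≤ MulAction.stabilizer G x) :
    Q ≤ MulAction.stabilizer G (n • x) := by
  intro q hq
  have hq' : n⁻¹ * q * n ∈ Q := (Subgroup.mem_normalizer_iff''.mp hn q).mp hq
  rw [MulAction.mem_stabilizer_iff]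
  calc q • n • x = n • (n⁻¹ * q * n) • x := by simp [mul_smul]
    _ = n • x := by rw [MulAction.mem_stabilizer_iff.mp (hx hq')]

theorem IsPPermAlgebra.exists_basis {k : Type*} [CommSemiring k] [Module k A]
    (hA : IsPPermAlgebra (G := G) A k) :
    ∃ (s : SubMulAction G A) (b : Module.Basis s k A),
      ∀ (g : G) (i : s), g • b i = b (g • i) := by
  obtain ⟨s, hs, hli, hspan⟩ := hA
  let s' : SubMulAction G A := ⟨s, fun g _ hx => hs g _ hx⟩
  refine ⟨s', Module.Basis.mk (ι := s') hli (by simpa using hspan.ge), fun g i => ?_⟩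
  simp [Module.Basis.mk_apply]

section Transitivity

open MulAction

variable {A} {Q S : Subgroup G}

theorem fixedSubring_anti (hQS : Q ≤ S) : fixedSubring A S ≤ fixedSubring A Q :=
  fun _ ha q hq => ha q (hQS hq)

theorem smul_mem_fixedSubring {n : G} (hn : n ∈ Subgroup.normalizer (Q : Set G)) {a : A}
    (ha : a ∈ fixedSubring A Q) : n • a ∈ fixedSubring A Q :=
  le_stabilizer_smul_of_mem_normalizer hn (x := a) ha

variable [Fintype G]

theorem mem_closure_brA_trSet_iff (hQS : Q ≤ S) {x : BrQuot A Q} :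
    x ∈ AddSubgroup.closure
        {y | ∃ R : Subgroup G, R < S ∧ ∃ t ∈ trSet A R S, y = brA A Q t} ↔
      ∃ c ∈ brKer A S, brA A Q c = x := by
  have hQ : ∀ {c}, c ∈ brKer A S → c ∈ fixedSubring A Q :=
    fun hc => fixedSubring_anti hQS (brKer_le_fixedSubring hc)
  constructor
  · intro hx
    induction hx using AddSubgroup.closure_induction with
    | mem y hy =>
      obtain ⟨R, hR, t, ht, rfl⟩ := hy
      exact ⟨t, AddSubgroup.subset_closure ⟨R, hR, ht⟩, rfl⟩
    | zero => exact ⟨0, zero_mem _, brA_zero A Q⟩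
    | add y z _ _ hy hz =>
      obtain ⟨c, hc, rfl⟩ := hy
      obtain ⟨d, hd, rfl⟩ := hz
      exact ⟨c + d, add_mem hc hd, brA_add (hQ hc) (hQ hd)⟩
    | neg y _ hy =>
      obtain ⟨c, hc, rfl⟩ := hy
      exact ⟨-c, neg_mem hc, brA_neg (hQ hc)⟩
  · rintro ⟨c, hc, rfl⟩
    induction hc using AddSubgroup.closure_induction with
    | mem t ht =>
      obtain ⟨R, hR, ht⟩ := ht
      exact AddSubgroup.subset_closure ⟨R, hR, t, ht, rfl⟩
    | zero => rw [brA_zero]; exact zero_mem _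
    | add u v hu hv ihu ihv => rw [brA_add (hQ hu) (hQ hv)]; exact add_mem ihu ihv
    | neg u hu ihu => rw [brA_neg (hQ hu)]; exact neg_mem ihu

variable {k : Type*} [Ring k] [Module k A] [SMulCommClass G k A] {p : ℕ} [Fact p.Prime]
  [CharP k p] {ι : Type*} [MulAction G ι] {b : Module.Basis ι k A}

theorem brA_eq_brA_of_brA_eq (hb : ∀ (g : G) (i : ι), g • b i = b (g • i))
    (hQ : IsPGroup p Q) (hS : IsPGroup p S) (hQS : Q ≤ S) {a c : A} (ha : a ∈ fixedSubring A S)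
    (hc : c ∈ fixedSubring A S) (h : brA A Q a = brA A Q c) : brA A S a = brA A S c := by
  rw [brA_eq_brA_iff_repr hb hQ (fixedSubring_anti hQS ha) (fixedSubring_anti hQS hc)] at h
  rw [brA_eq_brA_iff_repr hb hS ha hc]
  exact fun i hi => h i (hQS.trans hi)

theorem brA_mem_quotFixed (hb : ∀ (g : G) (i : ι), g • b i = b (g • i)) (hQ : IsPGroup p Q)
    (hQS : Q ≤ S) (hSnorm : S ≤ Subgroup.normalizer (Q : Set G)) {a : A}
    (ha : a ∈ fixedSubring A S) : brA A Q a ∈ quotFixed A Q S := by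
  intro n hn c hc hca
  have haQ := fixedSubring_anti hQS ha
  rw [brA_eq_brA_iff_repr hb hQ hc haQ] at hca
  rw [brA_eq_brA_iff_repr hb hQ (smul_mem_fixedSubring (hSnorm hn) hc) haQ]
  intro i hi
  have hi' := le_stabilizer_smul_of_mem_normalizer (hSnorm (S.inv_mem hn)) hi
  rw [repr_smul hb, hca _ hi', ← repr_smul hb, ha n hn]

theorem exists_brA_eq_of_mem_quotFixed (hb : ∀ (g : G) (i : ι), g • b i = b (g • i))
    (hQ : IsPGroup p Q) (hQS : Q ≤ S) (hSnorm : S ≤ Subgroup.normalizer (Q : Set G))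
    {x : BrQuot A Q} (hx : x ∈ quotFixed A Q S) : ∃ a ∈ fixedSubring A S, brA A Q a = x := by
  obtain ⟨a₀, ha₀, rfl⟩ := exists_brA_eq x
  set a := b.repr.symm ((b.repr a₀).filter fun i => Q ≤ stabilizer G i)
  have hrepr : ∀ i, b.repr a i = if Q ≤ stabilizer G i then b.repr a₀ i else 0 := fun i => by
    simp [a, Finsupp.filter_apply]
  have ha : a ∈ fixedSubring A S := by
    intro n hn
    refine b.repr.injective (Finsupp.ext fun i => ?_)
    have hiff : Q ≤ stabilizer G (n⁻¹ • i) ↔ Q ≤ stabilizer G i :=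
      ⟨fun h => by simpa using le_stabilizer_smul_of_mem_normalizer (hSnorm hn) h,
        le_stabilizer_smul_of_mem_normalizer (hSnorm (S.inv_mem hn))⟩
    rw [repr_smul hb, hrepr, hrepr, if_congr hiff rfl rfl]
    split_ifs with hi
    · have := (brA_eq_brA_iff_repr hb hQ (smul_mem_fixedSubring (hSnorm hn) ha₀) ha₀).mp
        (hx n hn a₀ ha₀ rfl) i hi
      rwa [repr_smul hb] at this
    · rfl
  refine ⟨a, ha, (brA_eq_brA_iff_repr hb hQ (fixedSubring_anti hQS ha) ha₀).mpr
    fun i hi => ?_⟩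
  rw [hrepr, if_pos hi]

end Transitivity

/-- Transitivity of Brauer maps: for `Q ⊴ S`, the Brauer homomorphism
`Br_S : A^S → A(S)` factors as `Br_S = Br_S^{A(Q)} ∘ Br_Q` through a map
`β : A(Q)^S → A(S)` which is a ring map on `A(Q)^S`, surjective, and whose kernel on
`A(Q)^S` is `Σ_{R<S} (A(Q))_R^S`; i.e. it induces the canonical isomorphism
`A(Q)(S) ≅ A(S)`. -/
theorem brauer_transitivity {p : ℕ} {k G A : Type*} [Fact p.Prime] [Field k]
    [CharP k p] [Group G] [Fintype G] [Ring A] [Algebra k A] [MulSemiringAction G A]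
    [SMulCommClass G k A]
    (hA : IsPPermAlgebra (G := G) A k) (Q S : Subgroup G) (hQ : IsPGroup p Q) (hS : IsPGroup p S)
    (hQS : Q ≤ S) (hSnorm : S ≤ Subgroup.normalizer (Q : Set G)) :
    ∃ β : BrQuot A Q → BrQuot A S,
      (∀ a : A, a ∈ fixedSubring A S → β (brA A Q a) = brA A S a) ∧
      (∀ x ∈ quotFixed A Q S, ∀ y ∈ quotFixed A Q S,
        β (x + y) = β x + β y ∧ β (x * y) = β x * β y) ∧
      β 0 = 0 ∧ β 1 = 1 ∧
      (∀ z : BrQuot A S, ∃ x ∈ quotFixed A Q S, β x = z) ∧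
      (∀ x ∈ quotFixed A Q S, (β x = 0 ↔
        x ∈ AddSubgroup.closure {y : BrQuot A Q | ∃ R : Subgroup G, R < S ∧
          ∃ a ∈ trSet A R S, y = brA A Q a})) := by
  obtain ⟨ι, b, hb⟩ := hA.exists_basis
  have hSQ := fixedSubring_anti (A := A) hQS
  have hfac : (fun a : fixedSubring A S => brA A S a).FactorsThrough (fun a => brA A Q a) :=
    fun a c h => brA_eq_brA_of_brA_eq hb hQ hS hQS a.2 c.2 h
  set β := Function.extend (fun a : fixedSubring A S => brA A Q a) (fun a => brA A S a) 0
  have hβ : ∀ a ∈ fixedSubring A S, β (brA A Q a) = brA A S a :=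
    fun a ha => hfac.extend_apply 0 ⟨a, ha⟩
  have hlift := fun x (hx : x ∈ quotFixed A Q S) =>
    exists_brA_eq_of_mem_quotFixed hb hQ hQS hSnorm hx
  refine ⟨β, hβ, fun x hx y hy => ?_, ?_, ?_, fun z => ?_, fun x hx => ?_⟩
  · obtain ⟨a, ha, rfl⟩ := hlift x hx
    obtain ⟨c, hc, rfl⟩ := hlift y hy
    rw [← brA_add (hSQ ha) (hSQ hc), ← brA_mul (hSQ ha) (hSQ hc), hβ _ (add_mem ha hc),
      hβ _ (mul_mem ha hc), hβ a ha, hβ c hc, brA_add ha hc, brA_mul ha hc]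
    exact ⟨rfl, rfl⟩
  · rw [← brA_zero A Q, hβ 0 (zero_mem _), brA_zero]
  · rw [← brA_one A Q, hβ 1 (one_mem _), brA_one]
  · obtain ⟨a, ha, rfl⟩ := exists_brA_eq z
    exact ⟨_, brA_mem_quotFixed hb hQ hQS hSnorm ha, hβ a ha⟩
  · obtain ⟨a, ha, rfl⟩ := hlift x hx
    rw [hβ a ha, mem_closure_brA_trSet_iff hQS, brA_eq_zero_iff ha]
    refine ⟨fun h => ⟨a, h, rfl⟩, fun ⟨c, hc, hca⟩ => ?_⟩
    have hcS := brKer_le_fixedSubring hc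
    rwa [← brA_eq_zero_iff ha, ← brA_eq_brA_of_brA_eq hb hQ hS hQS hcS ha hca,
      brA_eq_zero_iff hcS]

end PPerm
end

section
/- Let A be a G-algebra, N ⊴ G, and f_Q an idempotent of A fixed by a p-subgroup P, with f_Q's stabilizer H in N_G(Q) and the conjugates of f_Q pairwise orthogonal. If l ∈ (f_Q A f_Q)^H is an idempotent not lying in Σ_{R < P} (f_Q A f_Q)_R^P, then Tr_H^{N_G(Q)}(l) does not lie in Σ_{R < P} A_R^P either; concretely, if Tr_H^{N_G(Q)}(l) ∈ Σ_{R<P} A_R^P and f_Q is P-fixed, then l = f_Q · Tr_H^{N_G(Q)}(l) · f_Q ∈ Σ_{R<P} (f_Q A f_Q)_R^P. -/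
namespace PPerm
open scoped Classical


variable {G : Type*} [Group G]

variable (A : Type*) [Ring A] [MulSemiringAction G A]

/-! Cutting down by the `P`-fixed idempotent `fQ` is additive and commutes with the relative traces
`Tr_R^P`, so it maps `Σ_{R<P} A_R^P` into `Σ_{R<P} (fQ A fQ)_R^P`. Applied to `Tr_H^G(l)`, it kills
every summand `x • l` with `x ∉ H`, because `x • l` lies in the corner of `x • fQ`, which is
orthogonal to `fQ`; the one summand indexed by the representative of the coset `H` is `l` itself. -/

theorem IsTransversal.exists_mem_subgroup {G : Type*} [Group G] {H K : Subgroup G}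
    {S : Finset G} (hS : IsTransversal H K S) : ∃ x₀ ∈ S, x₀ ∈ H ∧ ∀ x ∈ S, x ∈ H → x = x₀ := by
  obtain ⟨x₀, ⟨hx₀S, hx₀H⟩, hx₀⟩ := hS.2 1 K.one_mem
  rw [mul_one, inv_mem_iff] at hx₀H
  exact ⟨x₀, hx₀S, hx₀H, fun x hxS hxH => hx₀ x ⟨hxS, by rwa [mul_one, inv_mem_iff]⟩⟩

section Corner

variable {G A : Type*} [Group G] [Ring A] [MulSemiringAction G A]

def cornerHom (e : A) : A →+ A :=
  (AddMonoidHom.mulRight e).comp (AddMonoidHom.mulLeft e)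

@[simp]
theorem cornerHom_apply (e a : A) : cornerHom e a = e * a * e := rfl

theorem cornerHom_mem_corner {e : A} (he : IsIdempotentElem e) (a : A) :
    cornerHom e a = e * cornerHom e a * e := by
  simp only [cornerHom_apply]
  calc e * a * e = (e * e) * a * (e * e) := by rw [he.eq]
    _ = e * (e * a * e) * e := by noncomm_ring

theorem cornerHom_smul_of_orthogonal {e a : A} {x : G} (ha : a = e * a * e)
    (h₁ : e * (x • e) = 0) (h₂ : (x • e) * e = 0) : cornerHom e (x • a) = 0 := by
  have hxa : x • a = (x • e) * (x • a) * (x • e) := by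
    conv_lhs => rw [ha]
    rw [smul_mul', smul_mul']
  calc e * (x • a) * e = (e * (x • e)) * (x • a) * ((x • e) * e) := by
        conv_lhs => rw [hxa]
        noncomm_ring
    _ = 0 := by rw [h₁, h₂, zero_mul, mul_zero]

theorem cornerHom_sum_smul {e : A} {P : Subgroup G} (he : ∀ g ∈ P, g • e = e) {S : Finset G}
    (hS : ↑S ⊆ (P : Set G)) (a : A) :
    cornerHom e (∑ x ∈ S, x • a) = ∑ x ∈ S, x • cornerHom e a := by
  rw [map_sum]
  refine Finset.sum_congr rfl fun x hx => ?_
  simp only [cornerHom_apply, smul_mul', he x (hS hx)]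

theorem cornerHom_mem_trSetIn {e : A} (he : IsIdempotentElem e) {P : Subgroup G}
    (heP : ∀ g ∈ P, g • e = e) {R : Subgroup G} (hRP : R ≤ P) {b : A} (hb : b ∈ trSet A R P) :
    cornerHom e b ∈ trSetIn A {a : A | a = e * a * e} R P := by
  obtain ⟨a, S, -, ha, hS, rfl⟩ := hb
  refine ⟨cornerHom e a, S, cornerHom_mem_corner he a, fun g hg => ?_, hS,
    cornerHom_sum_smul heP hS.1 a⟩
  simp only [cornerHom_apply, smul_mul', heP g (hRP hg), ha g hg]

theorem cornerHom_mem_closure_trSetIn {e : A} (he : IsIdempotentElem e) {P : Subgroup G}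
    (heP : ∀ g ∈ P, g • e = e) {b : A}
    (hb : b ∈ AddSubgroup.closure {x : A | ∃ R : Subgroup G, R < P ∧ x ∈ trSet A R P}) :
    cornerHom e b ∈ AddSubgroup.closure {x : A | ∃ R : Subgroup G, R < P ∧
      x ∈ trSetIn A {a : A | a = e * a * e} R P} := by
  have hmap := AddSubgroup.mem_map_of_mem (cornerHom e) hb
  rw [AddMonoidHom.map_closure] at hmap
  refine AddSubgroup.closure_mono ?_ hmap
  rintro _ ⟨b, ⟨R, hRP, hbR⟩, rfl⟩
  exact ⟨R, hRP, cornerHom_mem_trSetIn he heP hRP.le hbR⟩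

theorem cornerHom_sum_transversal {H K : Subgroup G} {e l : A} (horth : ∀ x y : G, x⁻¹ * y ∉ H → (x • e) * (y • e) = 0)
    (hl : l = e * l * e) (hlH : ∀ h ∈ H, h • l = l) {S : Finset G} (hS : IsTransversal H K S) :
    cornerHom e (∑ x ∈ S, x • l) = l := by
  obtain ⟨x₀, hx₀S, hx₀H, hx₀⟩ := hS.exists_mem_subgroup
  rw [map_sum, Finset.sum_eq_single_of_mem x₀ hx₀S, hlH x₀ hx₀H, cornerHom_apply, ← hl]
  intro x hxS hxx₀
  have hxH : x ∉ H := fun hxH => hxx₀ (hx₀ x hxS hxH)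
  refine cornerHom_smul_of_orthogonal hl ?_ ?_
  · simpa using horth 1 x (by simpa using hxH)
  · simpa using horth x 1 (by simpa using hxH)

end Corner

theorem trace_relative_projectivity_general {G A : Type*} [Group G] [Ring A]
    [MulSemiringAction G A]
    (H P : Subgroup G) (hPH : P ≤ H) (fQ l : A) (hfQ : IsIdempotentElem fQ)
    (hstab : ∀ h ∈ H, h • fQ = fQ)
    (horth : ∀ x y : G, x⁻¹ * y ∉ H → (x • fQ) * (y • fQ) = 0)
    (hl : l = fQ * l * fQ) (hlH : ∀ h ∈ H, h • l = l)
    (S : Finset G) (hS : IsTransversal H ⊤ S) :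
    fQ * (∑ x ∈ S, x • l) * fQ = l ∧
    ((∑ x ∈ S, x • l) ∈
        AddSubgroup.closure {x : A | ∃ R : Subgroup G, R < P ∧ x ∈ trSet A R P} →
      l ∈ AddSubgroup.closure {x : A | ∃ R : Subgroup G, R < P ∧
        x ∈ trSetIn A {a : A | a = fQ * a * fQ} R P}) ∧
    (l ∉ AddSubgroup.closure {x : A | ∃ R : Subgroup G, R < P ∧
        x ∈ trSetIn A {a : A | a = fQ * a * fQ} R P} →
      (∑ x ∈ S, x • l) ∉
        AddSubgroup.closure {x : A | ∃ R : Subgroup G, R < P ∧ x ∈ trSet A R P}) := by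
  have hcorner : cornerHom fQ (∑ x ∈ S, x • l) = l := cornerHom_sum_transversal horth hl hlH hS
  have hdescend := fun hmem => hcorner ▸
    cornerHom_mem_closure_trSetIn hfQ (fun g hg => hstab g (hPH hg)) hmem
  exact ⟨hcorner, hdescend, fun hnot hmem => hnot (hdescend hmem)⟩

/-- With `H` the stabilizer of the idempotent `fQ` (conjugates pairwise orthogonal),
`P ≤ H`, and `l` an `H`-fixed idempotent of the corner `fQ A fQ`:
`fQ · Tr_H^G(l) · fQ = l`, hence if `Tr_H^G(l) ∈ Σ_{R<P} A_R^P` then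
`l ∈ Σ_{R<P} (fQ A fQ)_R^P`, and consequently if `l` does not lie in the latter sum,
then `Tr_H^G(l)` does not lie in the former. -/
theorem trace_relative_projectivity {G A : Type*} [Group G] [Fintype G] [Ring A]
    [MulSemiringAction G A]
    (H P : Subgroup G) (hPH : P ≤ H) (fQ l : A) (hfQ : IsIdempotentElem fQ)
    (hstab : ∀ h ∈ H, h • fQ = fQ)
    (horth : ∀ x y : G, x⁻¹ * y ∉ H → (x • fQ) * (y • fQ) = 0)
    (hl : l = fQ * l * fQ) (hlH : ∀ h ∈ H, h • l = l) (hlid : IsIdempotentElem l)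
    (S : Finset G) (hS : IsTransversal H ⊤ S) :
    fQ * (∑ x ∈ S, x • l) * fQ = l ∧
    ((∑ x ∈ S, x • l) ∈
        AddSubgroup.closure {x : A | ∃ R : Subgroup G, R < P ∧ x ∈ trSet A R P} →
      l ∈ AddSubgroup.closure {x : A | ∃ R : Subgroup G, R < P ∧
        x ∈ trSetIn A {a : A | a = fQ * a * fQ} R P}) ∧
    (l ∉ AddSubgroup.closure {x : A | ∃ R : Subgroup G, R < P ∧
        x ∈ trSetIn A {a : A | a = fQ * a * fQ} R P} →
      (∑ x ∈ S, x • l) ∉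
        AddSubgroup.closure {x : A | ∃ R : Subgroup G, R < P ∧ x ∈ trSet A R P}) :=
  trace_relative_projectivity_general H P hPH fQ l hfQ hstab horth hl hlH S hS

end PPerm
end

section
/- Let j be a G-invariant primitive idempotent of C^N with defect group Q. A point α ⊆ A^G covers j (Definition: ∃ i ∈ α and a point ε ⊆ A^N of defect Q with ij = ji = i, if = fi = f, jf₁ = f₁j = f₁ for f, f₁ ∈ ε) if and only if there exists a point ε of N on the corner algebra jAj with defect group Q and a primitive idempotent i ∈ α with i ∈ (jAj)^G and if = fi = f for some f ∈ ε. -/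
namespace PPerm
open scoped Classical


variable {G : Type*} [Group G]

variable (A : Type*) [Ring A] [MulSemiringAction G A]

/-! Points are represented by primitive idempotents, so one may take `f₁ = f`. What remains is
that for a `G`-invariant idempotent `j` and an idempotent `f = j f j`, primitivity of `f` and its
defect groups are the same whether computed in `jAj` or in `A`: orthogonal idempotent summands
of `f` lie in `jAj`, and `a ↦ j a j` carries a trace presentation of `f` in `A` to one in
`jAj`. -/

section Corner

variable {B : Type*} [Ring B]

abbrev corner (j : B) : Set B := {a | a = j * a * j}

theorem mem_corner_iff {j a : B} (hj : IsIdempotentElem j) :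
    a ∈ corner j ↔ j * a = a ∧ a * j = a := by
  constructor
  · intro ha
    constructor
    · conv_lhs => rw [ha, ← mul_assoc, ← mul_assoc, hj.eq]
      exact ha.symm
    · conv_lhs => rw [ha, mul_assoc, hj.eq]
      exact ha.symm
  · rintro ⟨hja, haj⟩
    show a = j * a * j
    rw [hja, haj]

theorem mem_corner_of_mul_eq {j e a : B} (hj : IsIdempotentElem j) (he : e ∈ corner j)
    (hea : e * a = a) (hae : a * e = a) : a ∈ corner j := by
  obtain ⟨hje, hej⟩ := (mem_corner_iff hj).1 he
  refine (mem_corner_iff hj).2 ⟨?_, ?_⟩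
  · rw [← hea, ← mul_assoc, hje]
  · rw [← hae, mul_assoc, hej]

theorem mul_add_eq_left_of_orthogonal {a b : B} (ha : IsIdempotentElem a) (hab : a * b = 0) :
    a * (a + b) = a := by
  rw [mul_add, ha.eq, hab, add_zero]

theorem add_mul_eq_left_of_orthogonal {a b : B} (ha : IsIdempotentElem a) (hba : b * a = 0) :
    (a + b) * a = a := by
  rw [add_mul, ha.eq, hba, add_zero]

theorem isPrimIdemSet_corner_inter_iff {S : Set B} {j f : B} (hj : IsIdempotentElem j)
    (hf : f ∈ corner j) : IsPrimIdemSet (corner j ∩ S) f ↔ IsPrimIdemSet S f := by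
  constructor
  · rintro ⟨⟨-, hfS⟩, hfidem, hf0, hsplit⟩
    refine ⟨hfS, hfidem, hf0, fun a b haS hbS ha hb hab hba hfab => ?_⟩
    have haf := mem_corner_of_mul_eq hj hf
      (by rw [hfab, add_mul_eq_left_of_orthogonal ha hba])
      (by rw [hfab, mul_add_eq_left_of_orthogonal ha hab])
    have hbf := mem_corner_of_mul_eq hj hf
      (by rw [hfab, add_comm, add_mul_eq_left_of_orthogonal hb hab])
      (by rw [hfab, add_comm, mul_add_eq_left_of_orthogonal hb hba])
    exact hsplit a b ⟨haf, haS⟩ ⟨hbf, hbS⟩ ha hb hab hba hfab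
  · rintro ⟨hfS, hfidem, hf0, hsplit⟩
    exact ⟨⟨hf, hfS⟩, hfidem, hf0, fun a b haS hbS => hsplit a b haS.2 hbS.2⟩

end Corner

section Trace

variable {G : Type*} [Group G] {A : Type*} [Ring A] [MulSemiringAction G A]

theorem trSetIn_mono {V W : Set A} (hVW : V ⊆ W) {H K : Subgroup G} :
    trSetIn A V H K ⊆ trSetIn A W H K := by
  rintro b ⟨a, S, haV, hfix, hS, rfl⟩
  exact ⟨a, S, hVW haV, hfix, hS, rfl⟩

theorem smul_corner_mul {j : A} (hjG : ∀ g : G, g • j = j) (g : G) (a : A) :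
    g • (j * a * j) = j * (g • a) * j := by
  rw [smul_mul', smul_mul', hjG]

theorem mem_trSetIn_corner_iff {j f : A} (hj : IsIdempotentElem j) (hjG : ∀ g : G, g • j = j)
    (hf : f ∈ corner j) {H K : Subgroup G} :
    f ∈ trSetIn A (corner j) H K ↔ f ∈ trSetIn A Set.univ H K := by
  refine ⟨fun h => trSetIn_mono (Set.subset_univ _) h, ?_⟩
  rintro ⟨a, S, -, hfix, hS, hsum⟩
  refine ⟨j * a * j, S, ?_, fun h hh => by rw [smul_corner_mul hjG, hfix h hh], hS, ?_⟩
  · show j * a * j = j * (j * a * j) * j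
    rw [← mul_assoc, ← mul_assoc, hj.eq, mul_assoc (j * a), hj.eq]
  · calc f = j * (∑ x ∈ S, x • a) * j := by rw [← hsum]; exact hf
      _ = ∑ x ∈ S, x • (j * a * j) := by
        simp only [Finset.mul_sum, Finset.sum_mul, smul_corner_mul hjG]

theorem isDefectIn_corner_iff {j f : A} (hj : IsIdempotentElem j) (hjG : ∀ g : G, g • j = j)
    (hf : f ∈ corner j) {Q K : Subgroup G} :
    IsDefectIn A (corner j) f Q K ↔ IsDefect A f Q K := by
  simp only [IsDefect, IsDefectIn, mem_trSetIn_corner_iff hj hjG hf]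

end Trace

theorem isConjBy_refl {A : Type*} [Ring A] (V : Subring A) (a : A) : IsConjBy A (V : Set A) a a :=
  ⟨1, 1, V.one_mem, V.one_mem, one_mul 1, one_mul 1, by rw [one_mul, mul_one]⟩

theorem covering_iff_corner_covering_general {G A : Type*} [Group G] [Ring A] [MulSemiringAction G A]
    (N : Subgroup G)
    (j : A) (hj : IsIdempotentElem j) (hjG : ∀ g : G, g • j = j)
    (Q : Subgroup G)
    (i₀ : A) :
    (∃ i : A, IsConjBy A (fixedSubring A (⊤ : Subgroup G) : Set A) i₀ i ∧
      ∃ f f₁ : A, IsPrimIdemSet (fixedSubring A N : Set A) f ∧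
        IsPrimIdemSet (fixedSubring A N : Set A) f₁ ∧
        IsConjBy A (fixedSubring A N : Set A) f f₁ ∧ IsDefect A f Q N ∧
        (i * j = i ∧ j * i = i) ∧ (i * f = f ∧ f * i = f) ∧
        (j * f₁ = f₁ ∧ f₁ * j = f₁)) ↔
    (∃ i : A, IsConjBy A (fixedSubring A (⊤ : Subgroup G) : Set A) i₀ i ∧ i = j * i * j ∧
      ∃ f : A, IsPrimIdemSet ({a : A | a = j * a * j} ∩ (fixedSubring A N : Set A)) f ∧
        IsDefectIn A {a : A | a = j * a * j} f Q N ∧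
        i * f = f ∧ f * i = f) := by
  constructor
  · rintro ⟨i, hconj, f, -, hf, -, -, hdef, ⟨hij, hji⟩, ⟨hif, hfi⟩, -⟩
    have hi : i ∈ corner j := (mem_corner_iff hj).2 ⟨hji, hij⟩
    have hfc : f ∈ corner j := mem_corner_of_mul_eq hj hi hif hfi
    exact ⟨i, hconj, hi, f, (isPrimIdemSet_corner_inter_iff hj hfc).2 hf,
      (isDefectIn_corner_iff hj hjG hfc).2 hdef, hif, hfi⟩
  · rintro ⟨i, hconj, hi, f, hf, hdef, hif, hfi⟩
    have hfc : f ∈ corner j := hf.1.1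
    obtain ⟨hji, hij⟩ := (mem_corner_iff hj).1 hi
    have hf' := (isPrimIdemSet_corner_inter_iff hj hfc).1 hf
    exact ⟨i, hconj, f, f, hf', hf', isConjBy_refl _ f,
      (isDefectIn_corner_iff hj hjG hfc).1 hdef, ⟨hij, hji⟩, ⟨hif, hfi⟩,
      (mem_corner_iff hj).1 hfc⟩

/-- Equivalence of the two notions of covering: a point (represented by `i₀`) of `A^G`
covers the `G`-invariant primitive idempotent `j` of `C^N` (defect `Q`) iff there is a
point of `N` on the corner algebra `jAj` with defect group `Q` and a representative
`i ∈ (jAj)^G` of the point of `i₀` with `if = fi = f` for some `f` in that point. -/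
theorem covering_iff_corner_covering {p : ℕ} {k G A : Type*} [Fact p.Prime] [Field k]
    [CharP k p] [Group G] [Fintype G] [Ring A] [Algebra k A] [MulSemiringAction G A]
    [SMulCommClass G k A]
    (N : Subgroup G) (hN : N.Normal)
    (C : Subalgebra k A) (hCst : ∀ g : G, ∀ c ∈ C, g • c ∈ C)
    (hCsummand : ∃ D : Submodule k A, IsCompl (Subalgebra.toSubmodule C) D)
    (j : A) (hjC : j ∈ C) (hj : IsIdempotentElem j) (hjG : ∀ g : G, g • j = j)
    (hjprim : IsPrimIdemSet ((C : Set A) ∩ (fixedSubring A N : Set A)) j)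
    (Q : Subgroup G) (hQ : IsDefectIn A (C : Set A) j Q N)
    (i₀ : A) (hi₀ : IsPrimIdemSet (fixedSubring A (⊤ : Subgroup G) : Set A) i₀) :
    (∃ i : A, IsConjBy A (fixedSubring A (⊤ : Subgroup G) : Set A) i₀ i ∧
      ∃ f f₁ : A, IsPrimIdemSet (fixedSubring A N : Set A) f ∧
        IsPrimIdemSet (fixedSubring A N : Set A) f₁ ∧
        IsConjBy A (fixedSubring A N : Set A) f f₁ ∧ IsDefect A f Q N ∧
        (i * j = i ∧ j * i = i) ∧ (i * f = f ∧ f * i = f) ∧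
        (j * f₁ = f₁ ∧ f₁ * j = f₁)) ↔
    (∃ i : A, IsConjBy A (fixedSubring A (⊤ : Subgroup G) : Set A) i₀ i ∧ i = j * i * j ∧
      ∃ f : A, IsPrimIdemSet ({a : A | a = j * a * j} ∩ (fixedSubring A N : Set A)) f ∧
        IsDefectIn A {a : A | a = j * a * j} f Q N ∧
        i * f = f ∧ f * i = f) :=
  covering_iff_corner_covering_general N j hj hjG Q i₀

end PPerm
end
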